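/- Let k be a field of characteristic p > 0, G a finite group, M a kG-module, and R a normal p-subgroup of G acting trivially on M. Then for any subgroup Q ≤ G, the Brauer quotient M(QR), viewed as a k[N_G(Q)]-module by restriction along N_G(Q) ≤ N_G(QR), is isomorphic to the Brauer quotient M(Q) as a k[N_G(Q)]-module. -/

import Mathlib

/-! Since `R` acts trivially, `M^{QR} = M^Q`, and it remains to match the trace sums.
A trace from `T < QR` with `R ≤ T` equals the trace from `T ∩ Q < Q`, because inclusion induces
a bijection `Q/(T ∩ Q) → QR/T`; conversely, for `S < Q` with `R ∩ Q ≤ S` the trace from `S`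
equals the one from `SR < QR`. In the remaining cases a `p`-subgroup `N` (`R`, resp. `R ∩ Q`)
normalised by the subgroup `T` and not inside it acts trivially, so `M^T = M^{TN}` and the trace
from `T` factors through multiplication by `|TN : T| = |N : T ∩ N|`, a positive power of `p`. -/

variable {k V G : Type*} [Field k] [AddCommGroup V] [Module k V] [Group G]

/-- The subspace of `H`-fixed points `M^H` of a representation `M`. -/
def fixedSub (ρ : Representation k G V) (H : Subgroup G) : Submodule k V where
  carrier := {v | ∀ h ∈ H, ρ h v = v}
  add_mem' := by intro a b ha hb h hh; simp [map_add, ha h hh, hb h hh]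
  zero_mem' := by intro h hh; simp
  smul_mem' := by intro c v hv h hh; rw [LinearMap.map_smul, hv h hh]

/-- The relative trace map `tr_K^H : m ↦ Σ_{g ∈ [H/K]} g·m`, defined via a choice of
left coset representatives of `K` in `H` (on `K`-fixed points it is independent of
this choice). -/
noncomputable def relTrace [Finite G] (ρ : Representation k G V) (K H : Subgroup G) :
    V →ₗ[k] V :=
  letI : Fintype (H ⧸ K.subgroupOf H) := Fintype.ofFinite _
  ∑ x : H ⧸ K.subgroupOf H, ρ (x.out : G)

/-- The sum `Σ_{T < S} tr_T^S(M^T)` of the images of the relative traces from all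
proper subgroups of `S`. -/
noncomputable def traceSum [Finite G] (ρ : Representation k G V) (S : Subgroup G) :
    Submodule k V :=
  ⨆ T : {T : Subgroup G // T < S}, Submodule.map (relTrace ρ T.1 S) (fixedSub ρ T.1)

/-- The Brauer quotient (Brauer construction) `M(S) = M^S / Σ_{T<S} tr_T^S(M^T)`
as a `k`-vector space. -/
noncomputable abbrev BrauerQuotient [Finite G] (ρ : Representation k G V) (S : Subgroup G) :=
  (fixedSub ρ S) ⧸ ((traceSum ρ S).comap (fixedSub ρ S).subtype)

open Pointwise Subgroup

section Cosets

variable {K H K' H' : Subgroup G}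

def cosetInclusion (hK : K ≤ K') (hH : H ≤ H') :
    H ⧸ K.subgroupOf H → H' ⧸ K'.subgroupOf H' :=
  Quotient.map' (inclusion hH) fun a b hab => by
    rw [QuotientGroup.leftRel_apply] at hab ⊢
    exact hK hab

@[simp]
lemma cosetInclusion_mk (hK : K ≤ K') (hH : H ≤ H') (a : H) :
    cosetInclusion hK hH (a : H ⧸ K.subgroupOf H) =
      (inclusion hH a : H' ⧸ K'.subgroupOf H') :=
  rfl

lemma cosetInclusion_injective (hK : K ≤ K') (hH : H ≤ H') (h : H ⊓ K' ≤ K) :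
    Function.Injective (cosetInclusion hK hH) := by
  intro x y
  induction x using QuotientGroup.induction_on with | H a => ?_
  induction y using QuotientGroup.induction_on with | H b => ?_
  simp only [cosetInclusion_mk, QuotientGroup.eq, mem_subgroupOf]
  exact fun hab => h ⟨(a⁻¹ * b).2, hab⟩

lemma cosetInclusion_surjective (hK : K ≤ K') (hH : H ≤ H') (h : (H' : Set G) ⊆ H * K') :
    Function.Surjective (cosetInclusion hK hH) := by
  intro y
  induction y using QuotientGroup.induction_on with | H g => ?_
  obtain ⟨a, ha, c, hc, hac⟩ := h g.2
  refine ⟨((⟨a, ha⟩ : H) : H ⧸ K.subgroupOf H), ?_⟩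
  rw [cosetInclusion_mk, QuotientGroup.eq, mem_subgroupOf]
  simpa [← hac] using hc

lemma relIndex_sup_of_le_normalizer {S N : Subgroup G} (hSN : S ≤ normalizer (N : Set G)) :
    S.relIndex (S ⊔ N) = S.relIndex N := by
  have hsurj : ((S ⊔ N : Subgroup G) : Set G) ⊆ N * S := by
    rw [sup_comm, coe_mul_of_right_le_normalizer_left N S hSN]
  rw [← inf_relIndex_right S N]
  exact (Nat.card_congr <| Equiv.ofBijective _
    ⟨cosetInclusion_injective inf_le_left le_sup_right (inf_comm N S).le,
      cosetInclusion_surjective inf_le_left le_sup_right hsurj⟩).symm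

lemma IsPGroup.prime_dvd_relIndex {p : ℕ} [Fact p.Prime] [Finite G] {S N : Subgroup G}
    (hN : IsPGroup p N) (hNS : ¬N ≤ S) : p ∣ S.relIndex N := by
  obtain ⟨n, hn⟩ := hN.index (S.subgroupOf N)
  have hn0 : n ≠ 0 := by
    rintro rfl
    exact hNS (relIndex_eq_one.mp (by rw [relIndex, hn, pow_zero]))
  rw [relIndex, hn]
  exact dvd_pow_self p hn0

end Cosets

section Representation

variable (ρ : Representation k G V)

lemma fixedSub_antitone : Antitone (fixedSub ρ) :=
  fun _ _ hAB _ hv g hg => hv g (hAB hg)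

lemma fixedSub_sup (A B : Subgroup G) :
    fixedSub ρ (A ⊔ B) = fixedSub ρ A ⊓ fixedSub ρ B := by
  ext v
  change A ⊔ B ≤ (MulAction.stabilizer (V →ₗ[k] V)ˣ v).comap ρ.asGroupHom ↔
    A ≤ (MulAction.stabilizer (V →ₗ[k] V)ˣ v).comap ρ.asGroupHom ∧
      B ≤ (MulAction.stabilizer (V →ₗ[k] V)ˣ v).comap ρ.asGroupHom
  exact sup_le_iff

lemma fixedSub_sup_eq_of_trivial {H N : Subgroup G} (hN : ∀ n ∈ N, ∀ v, ρ n v = v) :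
    fixedSub ρ (H ⊔ N) = fixedSub ρ H := by
  rw [fixedSub_sup, inf_eq_left]
  exact fun v _ n hn => hN n hn v

lemma apply_eq_of_mk_eq {K H : Subgroup G} {v : V} (hv : v ∈ fixedSub ρ K) {a b : H}
    (hab : (a : H ⧸ K.subgroupOf H) = b) : ρ a v = ρ b v := by
  have hmem : a⁻¹ * b ∈ K.subgroupOf H := QuotientGroup.eq.mp hab
  have hfix : ρ (a⁻¹ * b : H) v = v := hv _ hmem
  calc ρ a v = ρ a (ρ (a⁻¹ * b : H) v) := by rw [hfix]
    _ = ρ b v := by rw [← Module.End.mul_apply, ← map_mul]; simp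

lemma map_mem_fixedSub_of_mem_normalizer {H : Subgroup G} {g : G}
    (hg : g ∈ normalizer (H : Set G)) {v : V} (hv : v ∈ fixedSub ρ H) :
    ρ g v ∈ fixedSub ρ H := by
  intro h hh
  calc ρ h (ρ g v) = ρ g (ρ (g⁻¹ * h * g) v) := by
        simp only [← Module.End.mul_apply, ← map_mul, mul_assoc, mul_inv_cancel_left]
    _ = ρ g v := by rw [hv _ ((mem_normalizer_iff''.mp hg h).mp hh)]

variable [Finite G]

lemma relTrace_apply (K H : Subgroup G) [Fintype (H ⧸ K.subgroupOf H)] (v : V) :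
    relTrace ρ K H v = ∑ x : H ⧸ K.subgroupOf H, ρ (x.out : H) v := by
  rw [relTrace, LinearMap.sum_apply]
  congr!

lemma relTrace_eq_of_bijective {K H K' H' : Subgroup G} (hK : K ≤ K') (hH : H ≤ H')
    (hbij : Function.Bijective (cosetInclusion hK hH)) {v : V} (hv : v ∈ fixedSub ρ K') :
    relTrace ρ K H v = relTrace ρ K' H' v := by
  have := Fintype.ofFinite (H ⧸ K.subgroupOf H)
  have := Fintype.ofFinite (H' ⧸ K'.subgroupOf H')
  rw [relTrace_apply, relTrace_apply, ← (Equiv.ofBijective _ hbij).sum_comp]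
  refine Finset.sum_congr rfl fun x _ => apply_eq_of_mk_eq ρ hv (a := inclusion hH x.out) ?_
  rw [← cosetInclusion_mk hK, QuotientGroup.out_eq', Equiv.ofBijective_apply,
    QuotientGroup.out_eq']

lemma relTrace_eq_relTrace_sup {K K' Q R : Subgroup G} [R.Normal] (hK : K ≤ K') (hRK : R ≤ K')
    (hQK : Q ⊓ K' ≤ K) {v : V} (hv : v ∈ fixedSub ρ K') :
    relTrace ρ K Q v = relTrace ρ K' (Q ⊔ R) v := by
  have hsurj : ((Q ⊔ R : Subgroup G) : Set G) ⊆ Q * K' := by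
    rw [mul_normal]
    exact Set.mul_subset_mul_left hRK
  exact relTrace_eq_of_bijective ρ hK le_sup_left
    ⟨cosetInclusion_injective hK le_sup_left hQK,
      cosetInclusion_surjective hK le_sup_left hsurj⟩ hv

lemma relTrace_eq_relIndex_smul {K L H : Subgroup G} (hKL : K ≤ L) (hLH : L ≤ H) {v : V}
    (hv : v ∈ fixedSub ρ L) : relTrace ρ K H v = K.relIndex L • relTrace ρ L H v := by
  have := Fintype.ofFinite (H ⧸ K.subgroupOf H)
  have := Fintype.ofFinite (H ⧸ L.subgroupOf H)
  have := Fintype.ofFinite (L.subgroupOf H ⧸ (K.subgroupOf H).subgroupOf (L.subgroupOf H))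
  let e := quotientEquivProdOfLE (s := K.subgroupOf H) (t := L.subgroupOf H) fun _ hx => hKL hx
  have hcard : Fintype.card (L.subgroupOf H ⧸ (K.subgroupOf H).subgroupOf (L.subgroupOf H)) =
      K.relIndex L := by
    rw [← Nat.card_eq_fintype_card, ← relIndex_subgroupOf hLH]
    rfl
  have hfst : ∀ x, ρ (x.out : H) v = ρ ((e x).1.out : H) v := fun x => by
    conv_rhs => rw [← QuotientGroup.out_eq' x]
    exact apply_eq_of_mk_eq ρ hv (QuotientGroup.out_eq' _).symm
  rw [relTrace_apply, relTrace_apply, Finset.sum_congr rfl fun x _ => hfst x,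
    e.sum_comp fun y => ρ (y.1.out : H) v, Fintype.sum_prod_type, Finset.smul_sum]
  simp only [Finset.sum_const, Finset.card_univ, hcard]

lemma relTrace_eq_zero_of_isPGroup {p : ℕ} [Fact p.Prime] [CharP k p] {S N H : Subgroup G}
    (hN : IsPGroup p N) (hNtriv : ∀ n ∈ N, ∀ v, ρ n v = v)
    (hSN : S ≤ normalizer (N : Set G)) (hNS : ¬N ≤ S) (hH : S ⊔ N ≤ H) {v : V} (hv : v ∈ fixedSub ρ S) :
    relTrace ρ S H v = 0 := by
  have hv' : v ∈ fixedSub ρ (S ⊔ N) := by rwa [fixedSub_sup_eq_of_trivial ρ hNtriv]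
  have hindex : (S.relIndex (S ⊔ N) : k) = 0 := by
    rw [relIndex_sup_of_le_normalizer hSN, CharP.cast_eq_zero_iff k p]
    exact hN.prime_dvd_relIndex hNS
  rw [relTrace_eq_relIndex_smul ρ le_sup_left hH hv', ← Nat.cast_smul_eq_nsmul k, hindex,
    zero_smul]

lemma relTrace_mem_traceSum {T S : Subgroup G} (hTS : T < S) {v : V} (hv : v ∈ fixedSub ρ T) :
    relTrace ρ T S v ∈ traceSum ρ S :=
  Submodule.mem_iSup_of_mem (⟨T, hTS⟩ : {T // T < S}) (Submodule.mem_map_of_mem hv)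

lemma traceSum_le {S : Subgroup G} {P : Submodule k V}
    (h : ∀ T < S, ∀ v ∈ fixedSub ρ T, relTrace ρ T S v ∈ P) : traceSum ρ S ≤ P :=
  iSup_le fun T => Submodule.map_le_iff_le_comap.mpr fun v hv => h T.1 T.2 v hv

lemma traceSum_sup_le_traceSum {p : ℕ} [Fact p.Prime] [CharP k p] {Q R : Subgroup G} [R.Normal]
    (hRp : IsPGroup p R) (htriv : ∀ r ∈ R, ∀ v, ρ r v = v) :
    traceSum ρ (Q ⊔ R) ≤ traceSum ρ Q := by
  refine traceSum_le ρ fun T hT v hv => ?_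
  by_cases hRT : R ≤ T
  · have hTQ : T ⊓ Q < Q := by
      refine inf_le_right.lt_of_ne fun h => hT.ne (le_antisymm hT.le (sup_le ?_ hRT))
      exact inf_eq_right.mp h
    rw [← relTrace_eq_relTrace_sup ρ inf_le_left hRT (inf_comm Q T).le hv]
    exact relTrace_mem_traceSum ρ hTQ (fixedSub_antitone ρ inf_le_left hv)
  · rw [relTrace_eq_zero_of_isPGroup ρ hRp htriv le_normalizer_of_normal hRT
      (sup_le hT.le le_sup_right) hv]
    exact zero_mem _

lemma traceSum_le_traceSum_sup {p : ℕ} [Fact p.Prime] [CharP k p] {Q R : Subgroup G} [R.Normal]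
    (hRp : IsPGroup p R) (htriv : ∀ r ∈ R, ∀ v, ρ r v = v) :
    traceSum ρ Q ≤ traceSum ρ (Q ⊔ R) := by
  refine traceSum_le ρ fun S hS v hv => ?_
  by_cases hRQS : R ⊓ Q ≤ S
  · have hinj : Q ⊓ (S ⊔ R) ≤ S := by
      intro g ⟨hgQ, hgSR⟩
      obtain ⟨s, hs, r, hr, rfl⟩ : g ∈ (S : Set G) * R := by rw [← mul_normal]; exact hgSR
      have hrQ : r ∈ Q := by simpa using Q.mul_mem (Q.inv_mem (hS.le hs)) hgQ
      exact S.mul_mem hs (hRQS ⟨hr, hrQ⟩)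
    have hSR : S ⊔ R < Q ⊔ R := by
      refine (sup_le_sup_right hS.le R).lt_of_ne fun h => hS.not_ge fun q hq => hinj ⟨hq, ?_⟩
      exact h ▸ (le_sup_left : Q ≤ Q ⊔ R) hq
    have hv' : v ∈ fixedSub ρ (S ⊔ R) := by rwa [fixedSub_sup_eq_of_trivial ρ htriv]
    rw [relTrace_eq_relTrace_sup ρ le_sup_left le_sup_right hinj hv']
    exact relTrace_mem_traceSum ρ hSR hv'
  · have hSN : S ≤ normalizer ((R ⊓ Q : Subgroup G) : Set G) :=
      (le_inf le_normalizer_of_normal (hS.le.trans le_normalizer)).trans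
        inf_normalizer_le_normalizer_inf
    rw [relTrace_eq_zero_of_isPGroup ρ hRp.to_inf_left (fun n hn => htriv n hn.1) hSN hRQS
      (sup_le hS.le inf_le_right) hv]
    exact zero_mem _

lemma traceSum_sup_eq {p : ℕ} [Fact p.Prime] [CharP k p] {Q R : Subgroup G} [R.Normal]
    (hRp : IsPGroup p R) (htriv : ∀ r ∈ R, ∀ v, ρ r v = v) :
    traceSum ρ (Q ⊔ R) = traceSum ρ Q :=
  le_antisymm (traceSum_sup_le_traceSum ρ hRp htriv) (traceSum_le_traceSum_sup ρ hRp htriv)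

end Representation

lemma exists_quotient_comap_subtype_equiv_of_eq {A A' P P' : Submodule k V} (hA : A = A')
    (hP : P = P') : ∃ e : (A ⧸ P.comap A.subtype) ≃ₗ[k] (A' ⧸ P'.comap A'.subtype),
      ∀ (v : A) (v' : A'), (v : V) = v' →
        e (Submodule.Quotient.mk v) = Submodule.Quotient.mk v' := by
  subst hA hP
  exact ⟨LinearEquiv.refl k _, fun v v' h => by rw [Subtype.ext h]; rfl⟩

/-- Let `k` be a field of characteristic `p > 0`, `G` a finite group, `M` a `kG`-module
and `R ⊴ G` a normal `p`-subgroup acting trivially on `M`. Then for `Q ≤ G`, the Brauer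
quotient `M(QR)`, viewed as `k[N_G(Q)]`-module by restriction along `N_G(Q) ≤ N_G(QR)`,
is isomorphic to `M(Q)` as a `k[N_G(Q)]`-module: there is a `k`-linear equivalence
induced by the identity on representatives (hence `N_G(Q)`-equivariant, the action of
`g ∈ N_G(Q)` on both sides being induced by `ρ g`). -/
theorem scott_brauer_quotient_iso {p : ℕ} (hp : p.Prime) [CharP k p] [Finite G]
    (ρ : Representation k G V) (R : Subgroup G) (hRn : R.Normal) (hRp : IsPGroup p R)
    (htriv : ∀ r ∈ R, ∀ v : V, ρ r v = v) (Q : Subgroup G) :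
    ∃ e : BrauerQuotient ρ (Q ⊔ R) ≃ₗ[k] BrauerQuotient ρ Q,
      (∀ (v : fixedSub ρ (Q ⊔ R)) (v' : fixedSub ρ Q), (v : V) = (v' : V) →
        e (Submodule.Quotient.mk v) = Submodule.Quotient.mk v') ∧
      (∀ g ∈ Subgroup.normalizer (Q : Set G), ∀ v ∈ fixedSub ρ (Q ⊔ R), ρ g v ∈ fixedSub ρ (Q ⊔ R)) ∧
      (∀ g ∈ Subgroup.normalizer (Q : Set G), ∀ v ∈ fixedSub ρ Q, ρ g v ∈ fixedSub ρ Q) := by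
  have : Fact p.Prime := ⟨hp⟩
  have hfix : fixedSub ρ (Q ⊔ R) = fixedSub ρ Q := fixedSub_sup_eq_of_trivial ρ htriv
  obtain ⟨e, he⟩ :=
    exists_quotient_comap_subtype_equiv_of_eq hfix (traceSum_sup_eq ρ hRp htriv)
  refine ⟨e, he, fun g hg v hv => ?_, fun g hg v hv =>
    map_mem_fixedSub_of_mem_normalizer ρ hg hv⟩
  rw [hfix] at hv ⊢
  exact map_mem_fixedSub_of_mem_normalizer ρ hg hv
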